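/- arXiv:1704.03734 — 7 statements merged into one kernel-verified Lean document; each statement's English description precedes it below -/
import Mathlib

section
/- Let T be the formal power series with T = z + T^2 and zero constant term. Then the bivariate expression S(z,t) = z + z·t/(1 - t - T^2), after substituting t = z, simplifies to z·(1 + T). Consequently, the number of Catalan–Stanley trees of size n equals 1 for n = 1 and equals the Catalan number C_{n-2} for all n ≥ 2. -/
/-!
Writing `T = X·U`, the equation `T = X + T²` becomes the Catalan equation `U = 1 + X·U²`, whose
coefficients obey the Catalan convolution recurrence; hence `[Xⁿ⁺¹] T = Cₙ`. The two sides of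
the identity for `S(z, z)` differ by `X(1 + T)(T - X - T²)`.
-/

open PowerSeries

namespace PowerSeries

variable {R : Type*}

theorem coeff_eq_catalan_of_eq_one_add_X_mul_sq [Semiring R] {U : R⟦X⟧}
    (hU : U = 1 + X * U ^ 2) (n : ℕ) : coeff n U = catalan n := by
  induction n using Nat.strong_induction_on with
  | _ n ih =>
    rw [hU]
    cases n with
    | zero => simp
    | succ n =>
      rw [map_add, coeff_one, if_neg n.succ_ne_zero, zero_add, coeff_succ_X_mul, sq, coeff_mul,
        catalan_succ']
      push_cast
      refine Finset.sum_congr rfl fun ij hij => ?_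
      have hsum : ij.1 + ij.2 = n := Finset.HasAntidiagonal.mem_antidiagonal.mp hij
      rw [ih ij.1 (by omega), ih ij.2 (by omega)]

theorem coeff_succ_eq_catalan_of_eq_X_add_sq [CommSemiring R] {T : R⟦X⟧}
    (hT0 : constantCoeff T = 0) (hT : T = X + T ^ 2) (n : ℕ) :
    coeff (n + 1) T = catalan n := by
  obtain ⟨U, rfl⟩ := X_dvd_iff.mpr hT0
  have hU : U = 1 + X * U ^ 2 := X_mul_cancel (by rw [hT]; ring)
  rw [coeff_succ_X_mul, coeff_eq_catalan_of_eq_one_add_X_mul_sq hU]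

end PowerSeries

/-- With `T` the formal power series satisfying `T = z + T^2`, `T(0) = 0`,
the series `S(z,t) = z + z·t/(1 - t - T^2)` specialized at `t = z`
simplifies to `z·(1+T)` (stated with the denominator `1 - z - T^2` cleared).
Consequently the number of Catalan–Stanley trees of size `n`, i.e. the `n`-th
coefficient of `S(z,z) = z·(1+T)`, equals `1` for `n = 1` and equals the
Catalan number `C_{n-2}` for all `n ≥ 2`. -/
theorem catalan_stanley_stmt1 (T : PowerSeries ℚ)
    (hT0 : constantCoeff T = 0) (hT : T = X + T ^ 2) :
    (X + X * T) * (1 - X - T ^ 2) = X * (1 - X - T ^ 2) + X * X ∧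
    coeff 1 (X + X * T) = 1 ∧
    ∀ n : ℕ, 2 ≤ n → coeff n (X + X * T) = (catalan (n - 2) : ℚ) := by
  refine ⟨by linear_combination X * (1 + T) * hT, ?_, fun n hn => ?_⟩
  · simp [coeff_X, coeff_succ_X_mul, hT0]
  · obtain ⟨m, rfl⟩ : ∃ m, n = m + 2 := ⟨n - 2, by omega⟩
    simp [coeff_X, coeff_succ_X_mul, coeff_succ_eq_catalan_of_eq_X_add_sq hT0 hT]
end

section
/- Define the substitution operator Ψ on bivariate formal power series by Ψ(f)(z,t) = f(z, t·T^2/(1-t)), where T = T(z) satisfies T = z + T^2. Then for every r ≥ 0, the r-fold iterate satisfies Ψ^r(t) = t·T^{2r} / (1 - t·(1 - T^{2r})/(1 - T^2)). -/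
open MvPowerSeries

local notation "R" => MvPowerSeries (Fin 2) ℚ
local notation "Z" => (X 0 : R)
local notation "tv" => (X 1 : R)

theorem RingHom.iterate_mul_eq_of_mul_one_sub_eq {A : Type*} [CommRing A] (Ψ : A →+* A)
    {q t : A} (hq : Ψ q = q) (ht : Ψ t * (1 - t) = t * q) (r : ℕ) :
    (⇑Ψ)^[r] t * ((1 - q) - t * (1 - q ^ r)) = t * q ^ r * (1 - q) := by
  induction r with
  | zero => simp
  | succ r ih =>
    rw [Function.iterate_succ_apply']
    -- Apply `Ψ` to the identity for `r`, multiply by `1 - t`, and eliminate `Ψ t * (1 - t)`.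
    have step := congrArg (fun x => Ψ x * (1 - t)) ih
    simp only [map_mul, map_sub, map_pow, map_one, hq] at step
    linear_combination step + (Ψ ((⇑Ψ)^[r] t) * (1 - q ^ r) + q ^ r * (1 - q)) * ht

theorem catalan_stanley_stmt2_general (T : R)
    (Ψ : R →+* R) (hΨT : Ψ T = T)
    (hΨt : Ψ tv * (1 - tv) = tv * T ^ 2) (r : ℕ) :
    (⇑Ψ)^[r] tv * ((1 - T ^ 2) - tv * (1 - T ^ (2 * r))) =
      tv * T ^ (2 * r) * (1 - T ^ 2) := by
  have hq : Ψ (T ^ 2) = T ^ 2 := by rw [map_pow, hΨT]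
  simpa only [pow_mul] using Ψ.iterate_mul_eq_of_mul_one_sub_eq hq hΨt r

/-- Let `T` be the formal power series with `T = z + T^2` and zero constant
term, and let `Ψ` be the substitution operator on bivariate formal power
series sending `f(z,t)` to `f(z, t·T^2/(1-t))`, i.e. the ring homomorphism
fixing `z` (and hence `T`) and sending `t` to `t·T^2/(1-t)` (stated with the
denominator cleared).  Then for every `r ≥ 0` the `r`-fold iterate satisfies
`Ψ^r(t) = t·T^{2r} / (1 - t·(1 - T^{2r})/(1 - T^2))`, stated with
denominators cleared. -/
theorem catalan_stanley_stmt2 (T : R)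
    (hT0 : constantCoeff T = 0) (hT : T = Z + T ^ 2)
    (Ψ : R →+* R) (hΨz : Ψ Z = Z) (hΨT : Ψ T = T)
    (hΨt : Ψ tv * (1 - tv) = tv * T ^ 2) (r : ℕ) :
    (⇑Ψ)^[r] tv * ((1 - T ^ 2) - tv * (1 - T ^ (2 * r))) =
      tv * T ^ (2 * r) * (1 - T ^ 2) :=
  catalan_stanley_stmt2_general T Ψ hΨT hΨt r
end

section
/- With Ψ as above (Ψ(t) = t·T^2/(1-t), T = z + T^2), for every r ≥ 1 the product ∏_{j=0}^{r-1} (1 - Ψ^j(t)) equals 1 - t·(1 - T^{2r})/(1 - T^2). -/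
/-!
Writing `s = T^2` and `P_r = ∏_{j<r} (1 - Ψ^j t)`, one has `P_{r+1} = (1 - t) · Ψ(P_r)`.
Applying `Ψ` to the identity for `r` and multiplying by `1 - t`, the relation
`(1 - t) Ψ(t) = t s` turns `(1 - t) Ψ(t) (1 - s^r)` into `t (s - s^{r+1})`, which is the
identity for `r + 1`.
-/

open MvPowerSeries

local notation "R" => MvPowerSeries (Fin 2) ℚ
local notation "Z" => (X 0 : R)
local notation "tv" => (X 1 : R)

section IteratedSubstitution

variable {A : Type*} [CommRing A] (Ψ : A →+* A) (t : A)

theorem prod_range_succ_one_sub_iterate (n : ℕ) :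
    ∏ j ∈ Finset.range (n + 1), (1 - Ψ^[j] t) =
      (1 - t) * Ψ (∏ j ∈ Finset.range n, (1 - Ψ^[j] t)) := by
  rw [Finset.prod_range_succ', Function.iterate_zero_apply, mul_comm, map_prod]
  congr 1
  refine Finset.prod_congr rfl fun j _ => ?_
  rw [map_sub, map_one, Function.iterate_succ_apply']

theorem prod_range_one_sub_iterate_mul_one_sub {s : A} (hΨs : Ψ s = s)
    (hΨt : Ψ t * (1 - t) = t * s) (r : ℕ) :
    (∏ j ∈ Finset.range r, (1 - Ψ^[j] t)) * (1 - s) = (1 - s) - t * (1 - s ^ r) := by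
  induction r with
  | zero => simp
  | succ n ih =>
    have hΨih := congrArg Ψ ih
    simp only [map_mul, map_sub, map_one, map_pow, hΨs] at hΨih
    rw [prod_range_succ_one_sub_iterate]
    linear_combination (1 - t) * hΨih - (1 - s ^ n) * hΨt

end IteratedSubstitution

theorem catalan_stanley_stmt3_general (T : R)
    (Ψ : R →+* R) (hΨT : Ψ T = T)
    (hΨt : Ψ tv * (1 - tv) = tv * T ^ 2) (r : ℕ) :
    (∏ j ∈ Finset.range r, (1 - (⇑Ψ)^[j] tv)) * (1 - T ^ 2) =
      (1 - T ^ 2) - tv * (1 - T ^ (2 * r)) := by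
  rw [pow_mul]
  exact prod_range_one_sub_iterate_mul_one_sub Ψ tv (by rw [map_pow, hΨT]) hΨt r

/-- With `Ψ` the substitution operator `f(z,t) ↦ f(z, t·T^2/(1-t))` (the ring
homomorphism fixing `z` and `T` and sending `t` to `t·T^2/(1-t)`, stated with
the denominator cleared), where `T = z + T^2` has zero constant term:
for every `r ≥ 1`, the product `∏_{j=0}^{r-1} (1 - Ψ^j(t))` equals
`1 - t·(1 - T^{2r})/(1 - T^2)`, stated with the denominator `1 - T^2`
cleared. -/
theorem catalan_stanley_stmt3 (T : R)
    (hT0 : (constantCoeff : R →+* ℚ) T = 0) (hT : T = Z + T ^ 2)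
    (Ψ : R →+* R) (hΨz : Ψ Z = Z) (hΨT : Ψ T = T)
    (hΨt : Ψ tv * (1 - tv) = tv * T ^ 2) (r : ℕ) (hr : 1 ≤ r) :
    (∏ j ∈ Finset.range r, (1 - (⇑Ψ)^[j] tv)) * (1 - T ^ 2) =
      (1 - T ^ 2) - tv * (1 - T ^ (2 * r)) :=
  catalan_stanley_stmt3_general T Ψ hΨT hΨt r
end

section
/- Let T be the formal power series with T = z + T^2 and zero constant term, let S(z) = z·(1+T), and for r ≥ 1 define F_{r-1}^{≤}(z) = z / (1 - z·(1 - T^{2r-2})/(1 - T^2)). Then S(z) - F_{r-1}^{≤}(z) = z·(1+T)·T^{2r-1}/(1 + T^{2r-1}). -/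
/-! Write `k = r - 1`. Since `z = T(1 - T)`, the denominator `(1 - T^2) - z(1 - T^{2k})` factors as
`(1 - T)(1 + T^{2k+1})`. The factor `1 - T` is a unit, so `F = z(1 + T)/(1 + T^{2k+1})`,
and `S - F = z(1 + T)(1 - 1/(1 + T^{2k+1}))`. -/

open PowerSeries

section CatalanRelation

variable {A : Type*} [CommRing A] {x t : A}

theorem one_sub_sq_sub_mul_eq_of_eq_add_sq (k : ℕ) (ht : t = x + t ^ 2) :
    (1 - t ^ 2) - x * (1 - t ^ (2 * k)) = (1 - t) * (1 + t ^ (2 * k + 1)) := by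
  linear_combination (1 - t ^ (2 * k)) * ht

theorem mul_one_add_pow_eq_of_eq_add_sq {f : A} (k : ℕ) (ht : t = x + t ^ 2)
    (hunit : IsUnit (1 - t)) (hf : f * ((1 - t ^ 2) - x * (1 - t ^ (2 * k))) = x * (1 - t ^ 2)) :
    f * (1 + t ^ (2 * k + 1)) = x * (1 + t) := by
  rw [one_sub_sq_sub_mul_eq_of_eq_add_sq k ht] at hf
  apply hunit.mul_left_cancel
  linear_combination hf

end CatalanRelation

theorem PowerSeries.isUnit_one_sub {R : Type*} [CommRing R] {φ : PowerSeries R}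
    (hφ : constantCoeff φ = 0) : IsUnit (1 - φ) :=
  isUnit_iff_constantCoeff.mpr (by simp [hφ])

/-- Let `T` be the formal power series with `T = z + T^2` and zero constant
term, let `S(z) = z·(1+T)` and, for `r ≥ 1`, let `F` be the series
`F_{r-1}^{≤}(z) = z / (1 - z·(1 - T^{2r-2})/(1 - T^2))`, characterized by the
cleared-denominator equation `F·((1-T^2) - z·(1-T^{2r-2})) = z·(1-T^2)`.
Then `S(z) - F = z·(1+T)·T^{2r-1}/(1 + T^{2r-1})`, stated with the
denominator `1 + T^{2r-1}` cleared. -/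
theorem catalan_stanley_stmt4 (r : ℕ) (hr : 1 ≤ r) (T F : PowerSeries ℚ)
    (hT0 : constantCoeff T = 0) (hT : T = X + T ^ 2)
    (hF : F * ((1 - T ^ 2) - X * (1 - T ^ (2 * (r - 1)))) = X * (1 - T ^ 2)) :
    (X * (1 + T) - F) * (1 + T ^ (2 * r - 1)) =
      X * (1 + T) * T ^ (2 * r - 1) := by
  have hFT := mul_one_add_pow_eq_of_eq_add_sq (r - 1) hT (isUnit_one_sub hT0) hF
  rw [show 2 * r - 1 = 2 * (r - 1) + 1 by omega]
  linear_combination -hFT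
end

section
/- For integers n ≥ 2 and r ≥ 1, every Catalan–Stanley tree of size n has age at least 1, and its age is at most ⌊n/2⌋. Moreover both bounds are attained: there exists a Catalan–Stanley tree of size n with age 1, and one with age exactly ⌊n/2⌋. -/
inductive PTree : Type
  | node : List PTree → PTree

namespace PTree

/-- number of nodes of a plane tree -/
def size : PTree → ℕ
  | node ts => 1 + (ts.attach.map (fun x => size x.1)).sum
decreasing_by
  have := List.sizeOf_lt_of_mem x.2
  simp only [PTree.node.sizeOf_spec]
  omega

/-- depth of the rightmost leaf of a tree (following last children). -/
def rdepth : PTree → ℕ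
  | node ts => ((ts.attach.map (fun x => 1 + rdepth x.1)).getLast?).getD 0
decreasing_by
  have := List.sizeOf_lt_of_mem x.2
  simp only [PTree.node.sizeOf_spec]
  omega

/-- A Catalan–Stanley tree: the rightmost leaf of every branch attached to
the root has odd distance to the root, i.e. every branch has even `rdepth`. -/
def isCS : PTree → Prop
  | node ts => ∀ t ∈ ts, Even (rdepth t)

/-- The age of a Catalan–Stanley tree: `(M+1)/2`, where `M` is the maximal
depth (distance from the root) of the rightmost leaves of the branches
attached to the root; this is `r` iff `M = 2r-1`, and `0` for the
single-node tree. -/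
def age : PTree → ℕ
  | node ts => ((ts.map (fun t => 1 + rdepth t)).foldr max 0 + 1) / 2

/-- The reduction `ρ` acting on a branch attached to the root whose rightmost
leaf is not a child of the root: the grandparent of the rightmost leaf
(the node at rightmost depth `rdepth - 2`) loses all of its subtrees. -/
def reduceBranch : PTree → PTree
  | node [] => node []
  | node (t :: ts) =>
    if 2 < rdepth (node (t :: ts)) then
      node ((t :: ts).dropLast ++ [reduceBranch ((t :: ts).getLast (by simp))])
    else node []
termination_by t => sizeOf t
decreasing_by
  simp only [node.sizeOf_spec]
  have := List.sizeOf_lt_of_mem (List.getLast_mem (l := t :: ts) (by simp))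
  omega

/-- The reduction `ρ`: rightmost leaves of branches which are children of the
root are deleted (i.e. single-node branches disappear), and in every other
branch the grandparent of its rightmost leaf loses all its subtrees. -/
def reduce : PTree → PTree
  | node ts => node ((ts.filter (fun t => t.size != 1)).map reduceBranch)

end PTree

/-!
Writing `M` for the largest value of `rdepth t + 1` over the branches `t` of the root, the age
is `(M + 1) / 2`, so `age τ ≤ k` says exactly that every branch has `rdepth < 2k`. A branch
`t` satisfies `rdepth t < size t ≤ size τ - 1`; in a Catalan–Stanley tree `rdepth t` is even,
which improves this to `rdepth t < 2 ⌊size τ / 2⌋`. Any nonempty root has age at least `1`,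
and both bounds are attained by a path of even length hanging from a root with extra leaves.
-/

namespace PTree

@[simp]
lemma size_node (ts : List PTree) : size (node ts) = 1 + (ts.map size).sum := by
  rw [size]; simp

@[simp]
lemma rdepth_node (ts : List PTree) :
    rdepth (node ts) = (ts.getLast?.map fun t => rdepth t + 1).getD 0 := by
  rw [rdepth]
  cases h : ts.getLast? <;> simp_all [List.getLast?_map, Nat.add_comm]

lemma size_lt_size_node {t : PTree} {ts : List PTree} (ht : t ∈ ts) :
    size t < size (node ts) := by
  have := List.le_sum_of_mem (List.mem_map_of_mem (f := size) ht)
  rw [size_node]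
  omega

lemma rdepth_lt_size : ∀ t : PTree, rdepth t < size t
  | node ts => by
    rw [rdepth_node]
    cases h : ts.getLast? with
    | none => simp
    | some t =>
      have ht : t ∈ ts := List.mem_of_getLast? h
      have := rdepth_lt_size t
      have := size_lt_size_node ht
      simp only [Option.map_some, Option.getD_some]
      omega
termination_by t => sizeOf t
decreasing_by
  simp only [node.sizeOf_spec]
  have := List.sizeOf_lt_of_mem ht
  omega

lemma foldr_max_zero_le_iff {l : List ℕ} {b : ℕ} : l.foldr max 0 ≤ b ↔ ∀ x ∈ l, x ≤ b := by
  induction l <;> simp [*]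

lemma age_node_le_iff {ts : List PTree} {k : ℕ} :
    age (node ts) ≤ k ↔ ∀ t ∈ ts, rdepth t < 2 * k := by
  have halve : ∀ M : ℕ, (M + 1) / 2 ≤ k ↔ M ≤ 2 * k := fun M => by omega
  rw [age, halve, foldr_max_zero_le_iff]
  simp only [List.mem_map, forall_exists_index, and_imp, forall_apply_eq_imp_iff₂]
  exact forall₂_congr fun _ _ => by omega

lemma lt_age_node_iff {ts : List PTree} {k : ℕ} :
    k < age (node ts) ↔ ∃ t ∈ ts, 2 * k ≤ rdepth t := by
  simpa using age_node_le_iff.not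

lemma one_le_age_of_two_le_size {τ : PTree} (hτ : 2 ≤ size τ) : 1 ≤ age τ := by
  obtain ⟨ts⟩ := τ
  obtain ⟨t, ht⟩ := List.exists_mem_of_ne_nil ts (by rintro rfl; simp at hτ)
  exact lt_age_node_iff.mpr ⟨t, ht, Nat.zero_le _⟩

lemma age_le_size_div_two {τ : PTree} (hτ : isCS τ) : age τ ≤ size τ / 2 := by
  obtain ⟨ts⟩ := τ
  refine age_node_le_iff.mpr fun t ht => ?_
  obtain ⟨j, hj⟩ := hτ t ht
  have := rdepth_lt_size t
  have := size_lt_size_node ht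
  omega

def chain : ℕ → PTree
  | 0 => node []
  | k + 1 => node [chain k]

@[simp]
lemma size_chain (k : ℕ) : size (chain k) = k + 1 := by
  induction k with
  | zero => simp [chain]
  | succ k ih =>
    simp only [chain, size_node, List.map_cons, ih, List.map_nil, List.sum_cons, List.sum_nil,
      add_zero]
    omega

@[simp]
lemma rdepth_chain (k : ℕ) : rdepth (chain k) = k := by
  induction k with
  | zero => simp [chain]
  | succ k ih => simp [chain, ih]

def broom (k m : ℕ) : PTree :=
  node (chain (2 * k) :: List.replicate m (node []))

lemma isCS_broom (k m : ℕ) : isCS (broom k m) := by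
  simp [broom, isCS]

lemma size_broom (k m : ℕ) : size (broom k m) = 2 * k + m + 2 := by
  simp only [broom, size_node, List.map_cons, size_chain, List.map_replicate, List.map_nil,
    List.sum_nil, add_zero, List.sum_cons, List.sum_replicate, smul_eq_mul, mul_one]
  omega

lemma age_broom (k m : ℕ) : age (broom k m) = k + 1 := by
  refine le_antisymm (age_node_le_iff.mpr ?_) (lt_age_node_iff.mpr ?_)
  · simp
  · exact ⟨chain (2 * k), List.mem_cons_self, by simp⟩

end PTree

open PTree

/-- For `n ≥ 2`, every Catalan–Stanley tree of size `n` has age at least `1`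
and at most `⌊n/2⌋`, and both bounds are attained by suitable Catalan–Stanley
trees of size `n`. -/
theorem catalan_stanley_stmt6 (n : ℕ) (hn : 2 ≤ n) :
    (∀ τ : PTree, τ.isCS → τ.size = n → 1 ≤ τ.age ∧ τ.age ≤ n / 2) ∧
    (∃ τ : PTree, τ.isCS ∧ τ.size = n ∧ τ.age = 1) ∧
    (∃ τ : PTree, τ.isCS ∧ τ.size = n ∧ τ.age = n / 2) := by
  refine ⟨fun τ hcs hsize => ?_, ⟨broom 0 (n - 2), ?_⟩, ⟨broom (n / 2 - 1) (n % 2), ?_⟩⟩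
  · subst hsize
    exact ⟨one_le_age_of_two_le_size hn, age_le_size_div_two hcs⟩
  · refine ⟨isCS_broom _ _, ?_, age_broom _ _⟩
    rw [size_broom]
    omega
  · refine ⟨isCS_broom _ _, ?_, ?_⟩
    · rw [size_broom]
      omega
    · rw [age_broom]
      omega
end

section
/- Let T be the formal power series with T = z + T^2 and T(0)=0. For fixed n and k, and every r ≥ 0, the identity Φ^r(z^n t^k) = z^n · (t·T^{2r})^k / (1 - t·(1-T^{2r})/(1-T^2))^{k+1} holds, where Φ is the operator defined by Φ(f)(z,t) = (1/(1-t))·f(z, t·T^2/(1-t)). -/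
/-!
Write `q = T²`, so that `Ψ` fixes `z` and `q` and sends `t` to `t q / (1 - t)`. With
`D_r = (1 - q) - t (1 - q^r)`, the substitution gives `Ψ(D_r) (1 - t) = D_{r+1}` and
`Ψ(t q^r) (1 - t) = t q^{r+1}`. Hence applying `Φ = Ψ / (1 - t)` to
`z^n (t q^r)^k / D_r^{k+1}` multiplies numerator and denominator by the same
`(1 - t)^{k+1}`, and induction on `r` gives the identity.
-/

open MvPowerSeries

local notation "R" => MvPowerSeries (Fin 2) ℚ
local notation "Z" => (X 0 : R)
local notation "tv" => (X 1 : R)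

section Substitution

variable {S : Type*} [CommRing S] {Ψ : S →+* S} {t q : S}

theorem map_denominator_mul_one_sub (hq : Ψ q = q) (ht : Ψ t * (1 - t) = t * q) (r : ℕ) :
    Ψ ((1 - q) - t * (1 - q ^ r)) * (1 - t) = (1 - q) - t * (1 - q ^ (r + 1)) := by
  simp only [map_sub, map_one, map_mul, map_pow, hq]
  linear_combination (q ^ r - 1) * ht

theorem map_numerator_mul_one_sub_pow (hq : Ψ q = q) (ht : Ψ t * (1 - t) = t * q)
    (r k : ℕ) : Ψ ((t * q ^ r) ^ k) * (1 - t) ^ k = (t * q ^ (r + 1)) ^ k := by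
  rw [map_pow, map_mul, map_pow, hq, ← mul_pow, mul_right_comm, ht]
  ring

theorem iterate_mul_denominator_pow {Φ : S → S} (hreg : IsRightRegular (1 - t))
    (hΦ : ∀ f, Φ f * (1 - t) = Ψ f) (hq : Ψ q = q) (ht : Ψ t * (1 - t) = t * q)
    {c : S} (hc : Ψ c = c) (k r : ℕ) :
    Φ^[r] (c * t ^ k) * ((1 - q) - t * (1 - q ^ r)) ^ (k + 1) =
      c * (t * q ^ r) ^ k * (1 - q) ^ (k + 1) := by
  induction r with
  | zero => simp
  | succ r ih =>
    apply hreg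
    have hΨ : Ψ (Φ^[r] (c * t ^ k)) * Ψ ((1 - q) - t * (1 - q ^ r)) ^ (k + 1) =
        c * Ψ ((t * q ^ r) ^ k) * (1 - q) ^ (k + 1) := by
      simpa only [map_mul, map_pow, map_sub, map_one, hc, hq] using congrArg Ψ ih
    calc Φ^[r + 1] (c * t ^ k) * ((1 - q) - t * (1 - q ^ (r + 1))) ^ (k + 1) * (1 - t)
        = Ψ (Φ^[r] (c * t ^ k)) * (Ψ ((1 - q) - t * (1 - q ^ r)) * (1 - t)) ^ (k + 1) := by
          rw [map_denominator_mul_one_sub hq ht, Function.iterate_succ_apply', ← hΦ]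
          ring
      _ = c * (Ψ ((t * q ^ r) ^ k) * (1 - t) ^ k) * (1 - q) ^ (k + 1) * (1 - t) := by
          rw [mul_pow, ← mul_assoc, hΨ]
          ring
      _ = c * (t * q ^ (r + 1)) ^ k * (1 - q) ^ (k + 1) * (1 - t) := by
          rw [map_numerator_mul_one_sub_pow hq ht]

end Substitution

theorem catalan_stanley_stmt14_general (n k : ℕ) (T : R)
    (Ψ : R →+* R) (hΨz : Ψ Z = Z) (hΨT : Ψ T = T)
    (hΨt : Ψ tv * (1 - tv) = tv * T ^ 2)
    (Φ : R → R) (hΦ : ∀ f : R, Φ f * (1 - tv) = Ψ f) (r : ℕ) :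
    Φ^[r] (Z ^ n * tv ^ k) * ((1 - T ^ 2) - tv * (1 - T ^ (2 * r))) ^ (k + 1) =
      Z ^ n * (tv * T ^ (2 * r)) ^ k * (1 - T ^ 2) ^ (k + 1) := by
  have hunit : IsUnit (1 - tv) := by
    simp [MvPowerSeries.isUnit_iff_constantCoeff]
  have hq : Ψ (T ^ 2) = T ^ 2 := by rw [map_pow, hΨT]
  have hc : Ψ (Z ^ n) = Z ^ n := by rw [map_pow, hΨz]
  simpa only [pow_mul] using
    iterate_mul_denominator_pow hunit.isRegular.right hΦ hq hΨt hc k r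

/-- Let `T` be the formal power series with `T = z + T^2`, `T(0) = 0`, let `Ψ`
be the substitution operator `f(z,t) ↦ f(z, t·T^2/(1-t))`, i.e. the ring
homomorphism fixing `z` (and hence `T`) and sending `t` to `t·T^2/(1-t)`
(stated with the denominator cleared), and let `Φ` be the operator
`Φ(f)(z,t) = (1/(1-t))·f(z, t·T^2/(1-t))`, i.e. `Φ(f)·(1-t) = Ψ(f)`.
Then for fixed `n`, `k` and every `r ≥ 0`,
`Φ^r(z^n t^k) = z^n·(t·T^{2r})^k / (1 - t·(1-T^{2r})/(1-T^2))^{k+1}`,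
stated with denominators cleared. -/
theorem catalan_stanley_stmt14 (n k : ℕ) (T : R)
    (hT0 : (constantCoeff : R →+* ℚ) T = 0) (hT : T = Z + T ^ 2)
    (Ψ : R →+* R) (hΨz : Ψ Z = Z) (hΨT : Ψ T = T)
    (hΨt : Ψ tv * (1 - tv) = tv * T ^ 2)
    (Φ : R → R) (hΦ : ∀ f : R, Φ f * (1 - tv) = Ψ f) (r : ℕ) :
    Φ^[r] (Z ^ n * tv ^ k) * ((1 - T ^ 2) - tv * (1 - T ^ (2 * r))) ^ (k + 1) =
      Z ^ n * (tv * T ^ (2 * r)) ^ k * (1 - T ^ 2) ^ (k + 1) :=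
  catalan_stanley_stmt14_general n k T Ψ hΨz hΨT hΨt Φ hΦ r
end

section
/- Let T be the formal power series with T = z + T^2 and T(0)=0, and let S(z,t) = z + z·t/(1 - t - T^2). Then Φ(S) = S, where Φ(f)(z,t) = (1/(1-t))·f(z, t·T^2/(1-t)). -/
open MvPowerSeries

local notation "R" => MvPowerSeries (Fin 2) ℚ
local notation "Z" => (X 0 : R)
local notation "tv" => (X 1 : R)

/-! With `q = T²`, both `S` and `Φ(S)` equal `z(1 - q)/(1 - t - q)`: the substitution turns
`1 - t - q` into `(1 - t - q)/(1 - t)`, and `(1 - t - q) + tq = (1 - t)(1 - q)`. Clearing the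
denominators `1 - t` and `1 - t - q`, which are units since `T(0) = 0`, the identity becomes
one between polynomials in `z, t, q, S, Ψ(S), Ψ(t), Φ(S)`. -/

theorem MvPowerSeries.isUnit_one_sub {σ A : Type*} [Ring A] {f : MvPowerSeries σ A}
    (hf : constantCoeff f = 0) : IsUnit (1 - f) := by
  simp [isUnit_iff_constantCoeff, hf]

theorem mul_eq_mul_of_cleared_substitution {A : Type*} [CommRing A] {z t t' q s s' φ : A}
    (hs : s * (1 - t - q) = z * (1 - t - q) + z * t)
    (hs' : s' * (1 - t' - q) = z * (1 - t' - q) + z * t')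
    (ht' : t' * (1 - t) = t * q) (hφ : φ * (1 - t) = s') :
    φ * ((1 - t) * (1 - t - q)) = s * ((1 - t) * (1 - t - q)) := by
  have hs'_cleared : s' * (1 - t - q) = z * (1 - t - q) + z * t * q := by
    linear_combination (1 - t) * hs' + s' * ht'
  linear_combination (1 - t - q) * hφ + hs'_cleared - (1 - t) * hs

theorem catalan_stanley_stmt15_general (T S : R)
    (hT0 : constantCoeff T = 0)
    (hS : S * (1 - tv - T ^ 2) = Z * (1 - tv - T ^ 2) + Z * tv)
    (Ψ : R →+* R) (hΨz : Ψ Z = Z) (hΨT : Ψ T = T)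
    (hΨt : Ψ tv * (1 - tv) = tv * T ^ 2)
    (Φ : R → R) (hΦ : ∀ f : R, Φ f * (1 - tv) = Ψ f) :
    Φ S = S := by
  have hΨS : Ψ S * (1 - Ψ tv - T ^ 2) = Z * (1 - Ψ tv - T ^ 2) + Z * Ψ tv := by
    simpa only [map_mul, map_sub, map_add, map_one, map_pow, hΨz, hΨT] using congrArg Ψ hS
  have hunit : IsUnit ((1 - tv) * (1 - tv - T ^ 2)) := by
    refine (isUnit_one_sub (constantCoeff_X 1)).mul ?_
    rw [sub_sub]
    exact isUnit_one_sub (by simp [hT0])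
  exact hunit.mul_right_cancel (mul_eq_mul_of_cleared_substitution hS hΨS hΨt (hΦ S))

/-- Let `T` be the formal power series with `T = z + T^2`, `T(0) = 0`, let
`S(z,t) = z + z·t/(1 - t - T^2)` (characterized by the cleared-denominator
equation `S·(1 - t - T^2) = z·(1 - t - T^2) + z·t`), let `Ψ` be the
substitution ring homomorphism fixing `z` (and hence `T`) and sending `t` to
`t·T^2/(1-t)` (stated with the denominator cleared), and let `Φ` be the
operator with `Φ(f)·(1-t) = Ψ(f)`, i.e.
`Φ(f)(z,t) = (1/(1-t))·f(z, t·T^2/(1-t))`.  Then `Φ(S) = S`. -/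
theorem catalan_stanley_stmt15 (T S : R)
    (hT0 : constantCoeff T = 0) (hT : T = Z + T ^ 2)
    (hS : S * (1 - tv - T ^ 2) = Z * (1 - tv - T ^ 2) + Z * tv)
    (Ψ : R →+* R) (hΨz : Ψ Z = Z) (hΨT : Ψ T = T)
    (hΨt : Ψ tv * (1 - tv) = tv * T ^ 2)
    (Φ : R → R) (hΦ : ∀ f : R, Φ f * (1 - tv) = Ψ f) :
    Φ S = S :=
  catalan_stanley_stmt15_general T S hT0 hS Ψ hΨz hΨT hΨt Φ hΦ
end
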